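/- For a complete set of d+1 mutually unbiased bases Π_t = {|b_{ti}⟩} of C^d (assumed to satisfy Σ_{t,i} |b_{ti}⟩⟨b_{ti}| ⊗ |b_{ti}⟩⟨b_{ti}| = 1⊗1 + F), the average skew-information coherence of a density matrix ρ equals (1/(d+1)) Σ_{t=1}^{d+1} Σ_{i=1}^{d} I(ρ, |b_{ti}⟩⟨b_{ti}|) = (d − (tr √ρ)²)/(d+1). -/

import Mathlib

open Matrix Finset Kronecker ComplexOrder

/-- The positive semidefinite square root of a positive semidefinite matrix
(the definition of `Matrix.PosSemidef.sqrt` in the older Mathlib). -/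
noncomputable def posSemidefSqrt {d : ℕ} {ρ : Matrix (Fin d) (Fin d) ℂ} (hρ : ρ.PosSemidef) :
    Matrix (Fin d) (Fin d) ℂ :=
  hρ.1.eigenvectorUnitary.1 * diagonal ((↑) ∘ (√·) ∘ hρ.1.eigenvalues) *
  (star hρ.1.eigenvectorUnitary : Matrix (Fin d) (Fin d) ℂ)

/-- The Wigner–Yanase skew information `I(ρ, O) = -(1/2) tr([√ρ, O]²)`. -/
noncomputable def skewInfo {d : ℕ} (ρ : Matrix (Fin d) (Fin d) ℂ) (hρ : ρ.PosSemidef)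
    (O : Matrix (Fin d) (Fin d) ℂ) : ℂ :=
  -(1 / 2 : ℂ) * ((posSemidefSqrt hρ * O - O * posSemidefSqrt hρ) ^ 2).trace

lemma posSemidefSqrt_mul_self {d : ℕ} {ρ : Matrix (Fin d) (Fin d) ℂ} (hρ : ρ.PosSemidef) :
    posSemidefSqrt hρ * posSemidefSqrt hρ = ρ := by
  unfold posSemidefSqrt
  conv_rhs => rw [hρ.1.spectral_theorem, Unitary.conjStarAlgAut_apply]
  have hU := Unitary.coe_star_mul_self hρ.1.eigenvectorUnitary
  calc _ = hρ.1.eigenvectorUnitary.1 * diagonal ((↑) ∘ (√·) ∘ hρ.1.eigenvalues) *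
        ((star hρ.1.eigenvectorUnitary : Matrix (Fin d) (Fin d) ℂ) * hρ.1.eigenvectorUnitary.1) *
        diagonal ((↑) ∘ (√·) ∘ hρ.1.eigenvalues) *
        (star hρ.1.eigenvectorUnitary : Matrix (Fin d) (Fin d) ℂ) := by simp only [mul_assoc]
    _ = _ := by
      rw [hU, Matrix.mul_one, mul_assoc _ (diagonal _) (diagonal _), diagonal_mul_diagonal]
      congr 3
      funext i
      simp only [Function.comp_apply]
      rw [← Complex.ofReal_mul, Real.mul_self_sqrt (hρ.eigenvalues_nonneg i)]
      rfl

lemma sum_swap_pairs {d : ℕ} (X Y : Matrix (Fin d) (Fin d) ℂ)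
    (M : Fin (d+1) → Fin d → Matrix (Fin d) (Fin d) ℂ) :
    ∑ t : Fin (d+1), ∑ i : Fin d, (X * M t i * Y * M t i).trace
      = ∑ s : Fin d, ∑ r : Fin d, ∑ q : Fin d, ∑ p : Fin d,
          X s p * Y q r * (∑ t : Fin (d+1), ∑ i : Fin d, M t i p q * M t i r s) := by
  have expand : ∀ t i, (X * M t i * Y * M t i).trace
      = ∑ s : Fin d, ∑ r : Fin d, ∑ q : Fin d, ∑ p : Fin d,
          X s p * Y q r * (M t i p q * M t i r s) := by
    intro t i
    simp only [Matrix.trace, Matrix.diag, Matrix.mul_apply, Finset.sum_mul]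
    refine Finset.sum_congr rfl fun s _ => ?_
    refine Finset.sum_congr rfl fun r _ => ?_
    refine Finset.sum_congr rfl fun q _ => ?_
    refine Finset.sum_congr rfl fun p _ => ?_
    ring
  simp only [expand]
  rw [← Fintype.sum_prod_type']
  conv_lhs => rw [Finset.sum_comm]
  refine Finset.sum_congr rfl fun s _ => ?_
  conv_lhs => rw [Finset.sum_comm]
  refine Finset.sum_congr rfl fun r _ => ?_
  conv_lhs => rw [Finset.sum_comm]
  refine Finset.sum_congr rfl fun q _ => ?_
  conv_lhs => rw [Finset.sum_comm]
  refine Finset.sum_congr rfl fun p _ => ?_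
  rw [← Finset.mul_sum, Fintype.sum_prod_type]

lemma sum_trace_eval {d : ℕ} (X Y : Matrix (Fin d) (Fin d) ℂ) :
    ∑ s : Fin d, ∑ r : Fin d, ∑ q : Fin d, ∑ p : Fin d,
        X s p * Y q r * ((if p = q then (1:ℂ) else 0) * (if r = s then 1 else 0)
            + (if p = s then 1 else 0) * (if r = q then 1 else 0))
      = (X * Y).trace + X.trace * Y.trace := by
  simp only [mul_add, Finset.sum_add_distrib, mul_ite, ite_mul, one_mul, mul_one, mul_zero,
    zero_mul, Finset.sum_ite_eq, Finset.sum_ite_eq', Finset.mem_univ, if_true]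
  congr 1
  · simp [Matrix.trace, Matrix.diag, Matrix.mul_apply]
  · rw [Matrix.trace, Matrix.trace]
    simp [Matrix.diag, Finset.sum_mul_sum]

lemma skew_expand {d : ℕ} (ρ : Matrix (Fin d) (Fin d) ℂ) (hρ : ρ.PosSemidef)
    (P : Matrix (Fin d) (Fin d) ℂ) :
    skewInfo ρ hρ P = (ρ * P * (1 : Matrix (Fin d) (Fin d) ℂ) * P).trace
      - (posSemidefSqrt hρ * P * posSemidefSqrt hρ * P).trace := by
  set A := posSemidefSqrt hρ with hA
  have hAA : A * A = ρ := posSemidefSqrt_mul_self hρ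
  have h2 : (A*P - P*A)^2 = A*P*A*P - A*(P*P)*A - P*(A*A)*P + P*A*P*A := by noncomm_ring
  rw [skewInfo, h2, Matrix.trace_add, Matrix.trace_sub, Matrix.trace_sub]
  have e1 : (A*(P*P)*A).trace = (ρ * P * 1 * P).trace := by
    rw [Matrix.trace_mul_cycle, hAA, Matrix.mul_one, ← mul_assoc]
  have e2 : (P*(A*A)*P).trace = (ρ * P * 1 * P).trace := by
    rw [Matrix.trace_mul_comm, hAA, Matrix.mul_one, ← mul_assoc, Matrix.trace_mul_cycle]
  have e3 : (P*A*P*A).trace = (A*P*A*P).trace := by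
    rw [Matrix.trace_mul_cycle, ← mul_assoc]
  rw [e1, e2, e3]
  ring

theorem average_coherence_mub (d : ℕ) (b : Fin (d + 1) → Fin d → Fin d → ℂ)
    (hsum : ∑ t : Fin (d + 1), ∑ i : Fin d, vecMulVec (b t i) (star (b t i))
      = ((d : ℂ) + 1) • (1 : Matrix (Fin d) (Fin d) ℂ))
    (hdesign : ∑ t : Fin (d + 1), ∑ i : Fin d,
        (vecMulVec (b t i) (star (b t i))) ⊗ₖ (vecMulVec (b t i) (star (b t i)))
      = (1 : Matrix (Fin d) (Fin d) ℂ) ⊗ₖ (1 : Matrix (Fin d) (Fin d) ℂ)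
        + ∑ k : Fin d, ∑ l : Fin d,
            (Matrix.single k l (1 : ℂ)) ⊗ₖ (Matrix.single l k (1 : ℂ)))
    (ρ : Matrix (Fin d) (Fin d) ℂ) (hρ : ρ.PosSemidef) (htr : ρ.trace = 1) :
    (1 / ((d : ℂ) + 1)) * ∑ t : Fin (d + 1), ∑ i : Fin d,
        skewInfo ρ hρ (vecMulVec (b t i) (star (b t i)))
      = ((d : ℂ) - (posSemidefSqrt hρ).trace ^ 2) / ((d : ℂ) + 1) := by
  set A := posSemidefSqrt hρ with hA
  set M : Fin (d+1) → Fin d → Matrix (Fin d) (Fin d) ℂ :=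
    fun t i => vecMulVec (b t i) (star (b t i)) with hM
  -- pointwise design identity
  have hpt : ∀ p q r s : Fin d, ∑ t : Fin (d + 1), ∑ i : Fin d, M t i p q * M t i r s
      = (if p = q then (1:ℂ) else 0) * (if r = s then 1 else 0)
          + (if p = s then 1 else 0) * (if r = q then 1 else 0) := by
    intro p q r s
    have h := Matrix.ext_iff.mpr hdesign (p, r) (q, s)
    simp only [Matrix.sum_apply, Matrix.add_apply, Matrix.kroneckerMap_apply,
      Matrix.one_apply, Matrix.single, Matrix.of_apply, mul_ite, ite_mul, one_mul,
      mul_one, mul_zero, zero_mul] at h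
    rw [hM]
    rw [h]
    simp [Finset.sum_ite_eq, Finset.sum_ite_eq', ite_and, eq_comm]
    split_ifs <;> simp
  -- the two trace sums
  have hkey : ∀ X Y : Matrix (Fin d) (Fin d) ℂ,
      ∑ t : Fin (d + 1), ∑ i : Fin d, (X * M t i * Y * M t i).trace
        = (X * Y).trace + X.trace * Y.trace := by
    intro X Y
    rw [sum_swap_pairs]
    simp only [hpt]
    exact sum_trace_eval X Y
  have hsum' : ∑ t : Fin (d + 1), ∑ i : Fin d, skewInfo ρ hρ (M t i)
      = (d : ℂ) - A.trace ^ 2 := by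
    have : ∀ t i, skewInfo ρ hρ (M t i)
        = (ρ * M t i * (1 : Matrix (Fin d) (Fin d) ℂ) * M t i).trace
          - (A * M t i * A * M t i).trace := fun t i => skew_expand ρ hρ (M t i)
    simp only [this]
    rw [Finset.sum_congr rfl fun t _ => Finset.sum_sub_distrib _ _, Finset.sum_sub_distrib,
      hkey ρ 1, hkey A A, Matrix.mul_one, htr, Matrix.trace_one, posSemidefSqrt_mul_self hρ, htr]
    simp only [Fintype.card_fin, one_mul, ← hA]
    ring
  rw [hsum']
  rw [one_div_mul_eq_div]
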